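/- Let a superport network with m > p have response matrix L, and let C be the response matrix of the electrical network obtained by unifying all the superports. Let C̃ be the matrix obtained from C by removing the last row and the last column; then C̃ is invertible. Let F := C̃^{−1} (rows and columns indexed by the boundary vertices 1,…,m−1); let G be obtained from F by subtracting, for each non-root boundary vertex k with root(k) ≠ m, the column root(k) from the column k; let H be obtained from G by subtracting, for each non-root boundary vertex k with root(k) ≠ m, the row root(k) from the row k; and let H' be obtained from H by deleting the row k and the column k for every root k ≠ m. Then H' is invertible and L = H'^{−1}. -/

import Mathlib

open Finset BigOperators
open scoped Classical

namespace Superport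

/-- A superport network: a finite connected simple graph on `Fin n` with conductances `c`
and `p` nonempty pairwise disjoint superports `A 0, …, A (p-1)` occupying the initial
segment of the vertices, ordered consecutively. -/
structure Network where
  n : ℕ
  p : ℕ
  graph : SimpleGraph (Fin n)
  c : Fin n → Fin n → ℝ
  A : Fin p → Finset (Fin n)
  p_pos : 0 < p
  connected : graph.Connected
  c_symm : ∀ k l, c k l = c l k
  c_pos : ∀ k l, graph.Adj k l → 0 < c k l
  c_zero : ∀ k l, ¬ graph.Adj k l → c k l = 0
  A_nonempty : ∀ i, (A i).Nonempty
  A_disjoint : ∀ i j, i ≠ j → Disjoint (A i) (A j)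
  A_ordered : ∀ i j u v, i < j → u ∈ A i → v ∈ A j → u < v
  boundary_initial : ∀ v : Fin n, (∃ i, v ∈ A i) ↔ (v : ℕ) < ∑ i, (A i).card

namespace Network

variable (N : Network)

/-- The set of boundary vertices. -/
def M : Finset (Fin N.n) := Finset.univ.biUnion N.A

/-- The number of boundary vertices. -/
def m : ℕ := N.M.card

theorem mem_M_iff {v : Fin N.n} : v ∈ N.M ↔ ∃ i, v ∈ N.A i := by
  simp [M, Finset.mem_biUnion]

/-- The root of the superport of a boundary vertex `v` (the vertex of maximal number
in the superport containing `v`); for interior `v` we set `root v = v`. -/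
noncomputable def root (v : Fin N.n) : Fin N.n :=
  if h : ∃ i, v ∈ N.A i then (N.A h.choose).max' ⟨v, h.choose_spec⟩ else v

/-- The index of the last superport. -/
def lastPort : Fin N.p := ⟨N.p - 1, Nat.sub_lt N.p_pos Nat.one_pos⟩

theorem M_nonempty : N.M.Nonempty := by
  obtain ⟨v, hv⟩ := N.A_nonempty N.lastPort
  exact ⟨v, N.mem_M_iff.mpr ⟨N.lastPort, hv⟩⟩

theorem root_mem {v : Fin N.n} (hv : v ∈ N.M) : N.root v ∈ N.M := by
  have h : ∃ i, v ∈ N.A i := N.mem_M_iff.mp hv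
  rw [root, dif_pos h]
  exact N.mem_M_iff.mpr ⟨h.choose, (N.A h.choose).max'_mem _⟩

theorem root_eq_self_of_max {v : Fin N.n} (hv : v ∈ N.M) (hmax : ∀ u ∈ N.M, u ≤ v) :
    N.root v = v := by
  have h : ∃ i, v ∈ N.A i := N.mem_M_iff.mp hv
  rw [root, dif_pos h]
  exact le_antisymm (hmax _ (N.mem_M_iff.mpr ⟨h.choose, (N.A h.choose).max'_mem _⟩))
    (Finset.le_max' _ _ h.choose_spec)

/-- Axioms (C), (I), (P), (B) for voltages `U`, currents `I`, and prescribed voltage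
differences `ΔU` (only the values of `ΔU` at non-root boundary vertices are relevant). -/
def Axioms (ΔU U : Fin N.n → ℝ) (I : Fin N.n → Fin N.n → ℝ) : Prop :=
  (∀ k l, I k l = N.c k l * (U k - U l)) ∧
  (∀ k, k ∉ N.M → ∑ l, I k l = 0) ∧
  (∀ i : Fin N.p, i ≠ N.lastPort → ∑ k ∈ N.A i, ∑ l, I k l = 0) ∧
  (∀ k, k ∈ N.M → N.root k ≠ k → U k - U (N.root k) = ΔU k)

/-- The weight of a subgraph: the product of the conductances of its edges. -/
noncomputable def weight (H : SimpleGraph (Fin N.n)) : ℝ :=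
  ∏ e ∈ (Set.toFinite H.edgeSet).toFinset, Sym2.lift ⟨N.c, N.c_symm⟩ e

/-- The number of edges of a subgraph. -/
noncomputable def edgeCount (H : SimpleGraph (Fin N.n)) : ℕ :=
  (Set.toFinite H.edgeSet).toFinset.card

/-- Two vertices lie in a common superport. -/
def samePort (u v : Fin N.n) : Prop := ∃ i, u ∈ N.A i ∧ v ∈ N.A i

/-- The `X`-equivalence: two boundary vertices not in `X` are equivalent iff they lie in
the same superport; each interior vertex and each vertex of `X` forms a singleton class.
For `X = ∅` this is the equivalence relation `∼`. -/
def xSetoid (X : Set (Fin N.n)) : Setoid (Fin N.n) where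
  r u v := u = v ∨ (u ∉ X ∧ v ∉ X ∧ N.samePort u v)
  iseqv := by
    constructor
    · intro u; exact Or.inl rfl
    · rintro u v (rfl | ⟨hu, hv, i, hui, hvi⟩)
      · exact Or.inl rfl
      · exact Or.inr ⟨hv, hu, i, hvi, hui⟩
    · rintro u v w huv hvw
      rcases huv with rfl | ⟨hu, hv, i, hui, hvi⟩
      · exact hvw
      rcases hvw with rfl | ⟨hv', hw, j, hvj, hwj⟩
      · exact Or.inr ⟨hu, hv, i, hui, hvi⟩
      · have hij : i = j := by
          by_contra hij
          exact (Finset.disjoint_left.mp (N.A_disjoint i j hij) hvi) hvj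
        exact Or.inr ⟨hu, hw, i, hui, hij ▸ hwj⟩

/-- The quotient of a graph `H` by an equivalence relation `s`: classes `a ≠ b` are
adjacent iff some representatives are adjacent in `H`. -/
def quotGraph (H : SimpleGraph (Fin N.n)) (s : Setoid (Fin N.n)) :
    SimpleGraph (Quotient s) where
  Adj a b := a ≠ b ∧ ∃ u v, H.Adj u v ∧ Quotient.mk s u = a ∧ Quotient.mk s v = b
  symm := by
    constructor
    rintro a b ⟨hab, u, v, huv, hu, hv⟩
    exact ⟨hab.symm, v, u, huv.symm, hv, hu⟩
  loopless := by
    constructor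
    rintro a ⟨hab, -⟩
    exact hab rfl

/-- A spanning forest of the network. -/
def IsSpanningForest (H : SimpleGraph (Fin N.n)) : Prop := H ≤ N.graph ∧ H.IsAcyclic

/-- A spanning forest becomes a spanning tree in the quotient by the `X`-equivalence
(in the multigraph sense): the quotient is connected and the number of edges of the
forest is one less than the number of equivalence classes.  For `X = {i}` this is
"valid relative to the vertex `i`"; for `X = ∅` this is "valid". -/
def IsValidRel (X : Set (Fin N.n)) (H : SimpleGraph (Fin N.n)) : Prop :=
  N.IsSpanningForest H ∧ (N.quotGraph H (N.xSetoid X)).Connected ∧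
    N.edgeCount H + 1 = Nat.card (Quotient (N.xSetoid X))

/-- A valid forest: a spanning forest which becomes a spanning tree in the quotient
by the equivalence `∼`. -/
def IsValidForest (H : SimpleGraph (Fin N.n)) : Prop := N.IsValidRel ∅ H

/-- The sign `sgn(H, i, j)` of a spanning forest `H` with respect to vertices `i, j`. -/
noncomputable def sgnIJ (H : SimpleGraph (Fin N.n)) (i j : Fin N.n) : ℝ :=
  if i = j ∨ ¬ (N.quotGraph H (N.xSetoid {i, j})).Reachable
      (Quotient.mk (N.xSetoid {i, j}) i) (Quotient.mk (N.xSetoid {i, j}) j)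
  then 1 else -1

/-- The type of non-root boundary vertices. -/
abbrev NonRoot := {v : Fin N.n // v ∈ N.M ∧ N.root v ≠ v}

/-- The type of boundary vertices. -/
abbrev Bdry := {v : Fin N.n // v ∈ N.M}

/-- `L` is the response matrix of the superport network: for any admissible voltages and
currents, the incoming currents at the non-root boundary vertices are obtained from the
prescribed voltage differences by multiplication by `L`. -/
def IsResponse (L : Matrix N.NonRoot N.NonRoot ℝ) : Prop :=
  ∀ (ΔU U : Fin N.n → ℝ) (I : Fin N.n → Fin N.n → ℝ), N.Axioms ΔU U I →
    ∀ x : N.NonRoot, (∑ l, I x.1 l) = ∑ y : N.NonRoot, L x y * ΔU y.1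

/-- `C` is the response matrix of the electrical network obtained by unifying all the
superports: same graph and conductances, boundary vertices `M`; axioms (C) and (I). -/
def IsElecResponse (C : Matrix N.Bdry N.Bdry ℝ) : Prop :=
  ∀ (Ub : N.Bdry → ℝ) (U : Fin N.n → ℝ) (I : Fin N.n → Fin N.n → ℝ),
    (∀ k l, I k l = N.c k l * (U k - U l)) →
    (∀ k, k ∉ N.M → ∑ l, I k l = 0) →
    (∀ v : N.Bdry, U v.1 = Ub v) →
    ∀ v : N.Bdry, (∑ l, I v.1 l) = ∑ u : N.Bdry, C v u * Ub u

/-- The sum of the weights of all valid forests. -/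
noncomputable def validForestSum : ℝ :=
  ∑ H ∈ Finset.univ.filter (fun H => N.IsValidForest H), N.weight H

end Network
end Superport

namespace Superport
namespace Network

variable (N : Network)

/-- The last (maximal) boundary vertex; it is the root of the last superport. -/
noncomputable def lastV : Fin N.n := N.M.max' N.M_nonempty

theorem nonroot_ne_lastV {v : Fin N.n} (hv : v ∈ N.M) (hr : N.root v ≠ v) :
    v ≠ N.lastV := by
  intro hEq
  apply hr
  subst hEq
  exact N.root_eq_self_of_max hv fun u hu => Finset.le_max' _ _ hu

/-- Boundary vertices other than the last one. -/
abbrev Bdry' := {v : Fin N.n // v ∈ N.M ∧ v ≠ N.lastV}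

/-- `C̃`: the response matrix of the unified electrical network with the last row and
column removed. -/
noncomputable def Ctilde (C : Matrix N.Bdry N.Bdry ℝ) : Matrix N.Bdry' N.Bdry' ℝ :=
  fun v w => C ⟨v.1, v.2.1⟩ ⟨w.1, w.2.1⟩

/-- Step 2 of the C2L algorithm: for each non-root boundary vertex `k` whose root is not
the last vertex, subtract the column `root k` from the column `k`. -/
noncomputable def stepCol (F : Matrix N.Bdry' N.Bdry' ℝ) : Matrix N.Bdry' N.Bdry' ℝ :=
  fun v w =>
    if h : N.root w.1 ≠ w.1 ∧ N.root w.1 ≠ N.lastV then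
      F v w - F v ⟨N.root w.1, N.root_mem w.2.1, h.2⟩
    else F v w

/-- Step 3 of the C2L algorithm: for each non-root boundary vertex `k` whose root is not
the last vertex, subtract the row `root k` from the row `k`. -/
noncomputable def stepRow (G : Matrix N.Bdry' N.Bdry' ℝ) : Matrix N.Bdry' N.Bdry' ℝ :=
  fun v w =>
    if h : N.root v.1 ≠ v.1 ∧ N.root v.1 ≠ N.lastV then
      G v w - G ⟨N.root v.1, N.root_mem v.2.1, h.2⟩ w
    else G v w

/-- Step 4 of the C2L algorithm: delete the rows and columns of all roots, i.e. keep only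
the non-root boundary vertices. -/
noncomputable def restrictNonRoot (H : Matrix N.Bdry' N.Bdry' ℝ) :
    Matrix N.NonRoot N.NonRoot ℝ :=
  fun v w => H ⟨v.1, v.2.1, N.nonroot_ne_lastV v.2.1 v.2.2⟩
    ⟨w.1, w.2.1, N.nonroot_ne_lastV w.2.1 w.2.2⟩

end Network

/-!
Given currents `J` at the non-root vertices, let `P` be the matrix whose column `z` is
`e_z - e_{root z}`. The boundary currents `P J` have zero total in every superport, so they are
realized in the unified network, grounded at the last boundary vertex, by the boundary potentials
`F P J` with `F = C̃⁻¹`. (`C̃` is invertible because a potential with zero current at all vertices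
but one has zero energy `∑ c (U k - U l)²`, hence is constant.) The prescribed voltage differences
`U z - U (root z)` of this solution are `Pᵀ F P J`, and the column and row subtractions of the
algorithm compute exactly `Pᵀ F P`; hence `L Pᵀ F P = 1`.
-/

open Matrix

theorem _root_.SimpleGraph.Preconnected.apply_eq_of_forall_adj {V β : Type*}
    {G : SimpleGraph V} (hG : G.Preconnected) {f : V → β}
    (hf : ∀ u v, G.Adj u v → f u = f v) (u v : V) : f u = f v := by
  obtain ⟨w⟩ := hG u v
  induction w with
  | nil => rfl
  | cons h _ ih => exact (hf _ _ h).trans ih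

theorem _root_.Fintype.sum_sum_eq_zero_of_antisymm {ι R : Type*} [Fintype ι] [NonAssocRing R]
    [NoZeroDivisors R] [CharZero R] (f : ι → ι → R) (hf : ∀ i j, f i j = -f j i) :
    ∑ i, ∑ j, f i j = 0 := by
  refine CharZero.eq_neg_self_iff.mp ?_
  conv_lhs => rw [Finset.sum_comm]
  rw [← Finset.sum_neg_distrib]
  refine Finset.sum_congr rfl fun j _ => ?_
  rw [← Finset.sum_neg_distrib]
  exact Finset.sum_congr rfl fun i _ => hf i j

namespace Network

variable (N : Network)

theorem c_nonneg (k l : Fin N.n) : 0 ≤ N.c k l := by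
  by_cases h : N.graph.Adj k l
  · exact (N.c_pos k l h).le
  · rw [N.c_zero k l h]

def current (U : Fin N.n → ℝ) (k : Fin N.n) : ℝ := ∑ l, N.c k l * (U k - U l)

theorem sum_current (U : Fin N.n → ℝ) : ∑ k, N.current U k = 0 :=
  Fintype.sum_sum_eq_zero_of_antisymm _ fun k l => by rw [N.c_symm k l]; ring

theorem sum_sq_eq_two_mul_sum_current (U : Fin N.n → ℝ) :
    ∑ k, ∑ l, N.c k l * (U k - U l) ^ 2 = 2 * ∑ k, U k * N.current U k := by
  have hanti := Fintype.sum_sum_eq_zero_of_antisymm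
    (fun k l => N.c k l * (U k - U l) * (U k + U l)) fun k l => by rw [N.c_symm k l]; ring
  calc ∑ k, ∑ l, N.c k l * (U k - U l) ^ 2
      = ∑ k, ∑ l, (2 * (U k * (N.c k l * (U k - U l))) - N.c k l * (U k - U l) * (U k + U l)) :=
        Finset.sum_congr rfl fun k _ => Finset.sum_congr rfl fun l _ => by ring
    _ = 2 * ∑ k, U k * N.current U k := by
        simp only [Finset.sum_sub_distrib, hanti, sub_zero, current, Finset.mul_sum]

theorem eq_of_forall_mul_current_eq_zero (U : Fin N.n → ℝ)
    (h : ∀ k, U k * N.current U k = 0) (u v : Fin N.n) : U u = U v := by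
  have hterm_nonneg : ∀ k l, 0 ≤ N.c k l * (U k - U l) ^ 2 :=
    fun k l => mul_nonneg (N.c_nonneg k l) (sq_nonneg _)
  have henergy : ∑ k, ∑ l, N.c k l * (U k - U l) ^ 2 = 0 := by
    simp [N.sum_sq_eq_two_mul_sum_current, h]
  have hterm : ∀ k l, N.c k l * (U k - U l) ^ 2 = 0 := fun k l =>
    (Finset.sum_eq_zero_iff_of_nonneg fun l _ => hterm_nonneg k l).mp
      ((Finset.sum_eq_zero_iff_of_nonneg fun k _ =>
        Finset.sum_nonneg fun l _ => hterm_nonneg k l).mp henergy k (Finset.mem_univ k))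
      l (Finset.mem_univ l)
  refine N.connected.preconnected.apply_eq_of_forall_adj (fun a b hab => ?_) u v
  have := (mul_eq_zero.mp (hterm a b)).resolve_left (N.c_pos a b hab).ne'
  exact sub_eq_zero.mp (pow_eq_zero_iff two_ne_zero |>.mp this)

def dirichletMap : (Fin N.n → ℝ) →ₗ[ℝ] (Fin N.n → ℝ) where
  toFun U k := if k ∈ N.M then U k else N.current U k
  map_add' U V := by
    ext k
    by_cases hk : k ∈ N.M <;>
      simp [hk, current, ← Finset.sum_add_distrib, mul_sub, mul_add, sub_add_sub_comm]
  map_smul' a U := by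
    ext k
    by_cases hk : k ∈ N.M <;> simp [hk, current, Finset.mul_sum, mul_sub, mul_left_comm]

theorem exists_harmonic_extension (g : Fin N.n → ℝ) :
    ∃ U : Fin N.n → ℝ, (∀ v ∈ N.M, U v = g v) ∧ ∀ k ∉ N.M, N.current U k = 0 := by
  have hinj : Function.Injective N.dirichletMap := by
    rw [← LinearMap.ker_eq_bot, LinearMap.ker_eq_bot']
    intro U hU
    have hval : ∀ k, (if k ∈ N.M then U k else N.current U k) = 0 := congrFun hU
    have hM : ∀ v ∈ N.M, U v = 0 := fun v hv => by simpa [hv] using hval v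
    have hconst := N.eq_of_forall_mul_current_eq_zero U fun k => by
      by_cases hk : k ∈ N.M
      · rw [hM k hk, zero_mul]
      · simpa [hk] using congrArg (U k * ·) (hval k)
    obtain ⟨v, hv⟩ := N.M_nonempty
    ext k
    rw [hconst k v, hM v hv, Pi.zero_apply]
  obtain ⟨U, hU⟩ := LinearMap.injective_iff_surjective.mp hinj
    fun k => if k ∈ N.M then g k else 0
  refine ⟨U, fun v hv => ?_, fun k hk => ?_⟩
  · simpa [dirichletMap, hv] using congrFun hU v
  · simpa [dirichletMap, hk] using congrFun hU k

theorem port_unique {v : Fin N.n} {i j : Fin N.p} (hi : v ∈ N.A i) (hj : v ∈ N.A j) :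
    i = j := by
  by_contra hij
  exact Finset.disjoint_left.mp (N.A_disjoint i j hij) hi hj

theorem root_eq_max' {v : Fin N.n} {i : Fin N.p} (hv : v ∈ N.A i) :
    N.root v = (N.A i).max' ⟨v, hv⟩ := by
  have h : ∃ j, v ∈ N.A j := ⟨i, hv⟩
  rw [root, dif_pos h]
  congr 1
  rw [N.port_unique h.choose_spec hv]

theorem root_mem_port {v : Fin N.n} {i : Fin N.p} (hv : v ∈ N.A i) : N.root v ∈ N.A i := by
  rw [N.root_eq_max' hv]
  exact Finset.max'_mem _ _

theorem root_mem_port_iff {v : Fin N.n} (hv : v ∈ N.M) (i : Fin N.p) :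
    N.root v ∈ N.A i ↔ v ∈ N.A i := by
  obtain ⟨j, hj⟩ := N.mem_M_iff.mp hv
  refine ⟨fun h => ?_, N.root_mem_port⟩
  rwa [N.port_unique h (N.root_mem_port hj)]

theorem root_root {v : Fin N.n} (hv : v ∈ N.M) : N.root (N.root v) = N.root v := by
  obtain ⟨i, hi⟩ := N.mem_M_iff.mp hv
  rw [N.root_eq_max' (N.root_mem_port hi), ← N.root_eq_max' hi]

theorem port_subset_M (i : Fin N.p) : N.A i ⊆ N.M := fun _ hv => N.mem_M_iff.mpr ⟨i, hv⟩

theorem lastV_mem : N.lastV ∈ N.M := N.M.max'_mem N.M_nonempty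

theorem lastV_mem_lastPort : N.lastV ∈ N.A N.lastPort := by
  obtain ⟨i, hi⟩ := N.mem_M_iff.mp N.lastV_mem
  obtain rfl | hne := eq_or_ne i N.lastPort
  · exact hi
  obtain ⟨v, hv⟩ := N.A_nonempty N.lastPort
  have hlt : i < N.lastPort := lt_of_le_of_ne (Nat.le_sub_one_of_lt i.2) hne
  exact absurd (N.M.le_max' v (N.port_subset_M _ hv))
    (not_le.mpr (N.A_ordered i N.lastPort N.lastV v hlt hi hv))

theorem ne_lastV_of_mem_port {k : Fin N.n} {i : Fin N.p} (hi : i ≠ N.lastPort)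
    (hk : k ∈ N.A i) : k ≠ N.lastV := by
  rintro rfl
  exact hi (N.port_unique hk N.lastV_mem_lastPort)

noncomputable def extendZero (x : N.Bdry' → ℝ) (v : Fin N.n) : ℝ :=
  if h : v ∈ N.M ∧ v ≠ N.lastV then x ⟨v, h⟩ else 0

theorem extendZero_val (x : N.Bdry' → ℝ) (w : N.Bdry') : N.extendZero x w.1 = x w :=
  dif_pos w.2

theorem extendZero_lastV (x : N.Bdry' → ℝ) : N.extendZero x N.lastV = 0 :=
  dif_neg fun h => h.2 rfl

theorem sum_ite_val_eq_extendZero (x : N.Bdry' → ℝ) (v : Fin N.n) :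
    ∑ w : N.Bdry', (if w.1 = v then x w else 0) = N.extendZero x v := by
  by_cases hv : v ∈ N.M ∧ v ≠ N.lastV
  · rw [extendZero, dif_pos hv, Finset.sum_eq_single_of_mem ⟨v, hv⟩ (Finset.mem_univ _)
      fun w _ hw => if_neg fun h => hw (Subtype.ext h), if_pos rfl]
  · rw [extendZero, dif_neg hv]
    exact Finset.sum_eq_zero fun w _ => if_neg fun (h : w.1 = v) => hv (h ▸ w.2)

theorem sum_bdry_eq_sum_bdry' (f : N.Bdry → ℝ) (h : f ⟨N.lastV, N.lastV_mem⟩ = 0) :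
    ∑ u, f u = ∑ w : N.Bdry', f ⟨w.1, w.2.1⟩ := by
  rw [Fintype.sum_eq_add_sum_subtype_ne _ ⟨N.lastV, N.lastV_mem⟩, h, zero_add]
  exact Fintype.sum_equiv
    { toFun := fun u => ⟨u.1.1, u.1.2, fun h => u.2 (Subtype.ext h)⟩
      invFun := fun w => ⟨⟨w.1, w.2.1⟩, fun h => w.2.2 (congrArg Subtype.val h)⟩ }
    _ _ fun _ => rfl

variable {N}

theorem exists_potential {C : Matrix N.Bdry N.Bdry ℝ} (hC : N.IsElecResponse C)
    (x : N.Bdry' → ℝ) :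
    ∃ U : Fin N.n → ℝ, (∀ v ∈ N.M, U v = N.extendZero x v) ∧ (∀ k ∉ N.M, N.current U k = 0) ∧
      ∀ w : N.Bdry', N.current U w.1 = (N.Ctilde C *ᵥ x) w := by
  obtain ⟨U, hUM, hUint⟩ := N.exists_harmonic_extension (N.extendZero x)
  refine ⟨U, hUM, hUint, fun w => ?_⟩
  rw [current, hC (fun u => N.extendZero x u.1) U _ (fun _ _ => rfl) hUint
    (fun u => hUM u.1 u.2) ⟨w.1, w.2.1⟩,
    N.sum_bdry_eq_sum_bdry' _ (by rw [N.extendZero_lastV, mul_zero])]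
  simp only [N.extendZero_val, Matrix.mulVec, dotProduct, Ctilde]

theorem isUnit_Ctilde {C : Matrix N.Bdry N.Bdry ℝ} (hC : N.IsElecResponse C) :
    IsUnit (N.Ctilde C) := by
  rw [← Matrix.mulVec_injective_iff_isUnit, ← Matrix.coe_mulVecLin,
    ← LinearMap.ker_eq_bot, LinearMap.ker_eq_bot']
  intro x hx
  obtain ⟨U, hUM, hUint, hUcur⟩ := exists_potential hC x
  have hcur : ∀ k ≠ N.lastV, N.current U k = 0 := fun k hk => by
    by_cases hkM : k ∈ N.M
    · exact (hUcur ⟨k, hkM, hk⟩).trans (congrFun hx _)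
    · exact hUint k hkM
  have hlast : N.current U N.lastV = 0 := by
    rw [← N.sum_current U, Finset.sum_eq_single N.lastV (fun k _ hk => hcur k hk)
      (fun h => absurd (Finset.mem_univ _) h)]
  have hconst := N.eq_of_forall_mul_current_eq_zero U fun k => by
    obtain rfl | hk := eq_or_ne k N.lastV
    · rw [hlast, mul_zero]
    · rw [hcur k hk, mul_zero]
  ext w
  rw [Pi.zero_apply, ← N.extendZero_val x w, ← hUM w.1 w.2.1, hconst w.1 N.lastV,
    hUM _ N.lastV_mem, N.extendZero_lastV]

variable (N)

/-- Column `z` is `e_z - e_{root z}`: it turns currents at the non-root vertices into currents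
at all boundary vertices (a root takes minus the sum over its superport), and its transpose
turns potentials into the differences `U z - U (root z)`. -/
noncomputable def portIncidence : Matrix (Fin N.n) N.NonRoot ℝ :=
  fun k z => (if k = z.1 then 1 else 0) - if k = N.root z.1 then 1 else 0

noncomputable def reducedIncidence : Matrix N.Bdry' N.NonRoot ℝ :=
  N.portIncidence.submatrix Subtype.val id

theorem sum_portIncidence_port (i : Fin N.p) (z : N.NonRoot) :
    ∑ k ∈ N.A i, N.portIncidence k z = 0 := by
  simp only [portIncidence, Finset.sum_sub_distrib, Finset.sum_ite_eq',
    N.root_mem_port_iff z.2.1, sub_self]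

theorem sum_reducedIncidence_mul (x : N.Bdry' → ℝ) (z : N.NonRoot) :
    ∑ w, N.reducedIncidence w z * x w = N.extendZero x z.1 - N.extendZero x (N.root z.1) := by
  simp only [reducedIncidence, portIncidence, Matrix.submatrix_apply, id, sub_mul, ite_mul,
    one_mul, zero_mul, Finset.sum_sub_distrib, N.sum_ite_val_eq_extendZero]

theorem reducedIncidence_mulVec_apply (J : N.NonRoot → ℝ) (y : N.NonRoot) :
    (N.reducedIncidence *ᵥ J) ⟨y.1, y.2.1, N.nonroot_ne_lastV y.2.1 y.2.2⟩ = J y := by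
  have hroot : ∀ z : N.NonRoot, y.1 ≠ N.root z.1 := fun z h =>
    y.2.2 (by rw [h, N.root_root z.2.1])
  simp [Matrix.mulVec, dotProduct, reducedIncidence, portIncidence, hroot, ite_mul,
    ← Subtype.ext_iff]

theorem extendZero_sub_extendZero_root (x : N.Bdry' → ℝ) {v : Fin N.n} (hv : v ∈ N.M)
    (hr : N.root v ≠ v) :
    N.extendZero x v - N.extendZero x (N.root v) =
      x ⟨v, hv, N.nonroot_ne_lastV hv hr⟩ -
        if h : N.root v ≠ N.lastV then x ⟨N.root v, N.root_mem hv, h⟩ else 0 := by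
  rw [extendZero, dif_pos ⟨hv, N.nonroot_ne_lastV hv hr⟩]
  by_cases h : N.root v = N.lastV
  · rw [dif_neg (not_not_intro h), h, N.extendZero_lastV]
  · rw [extendZero, dif_pos ⟨N.root_mem hv, h⟩, dif_pos h]

theorem mul_reducedIncidence_apply (F : Matrix N.Bdry' N.Bdry' ℝ) (a : N.Bdry')
    (z : N.NonRoot) :
    (F * N.reducedIncidence) a z = F a ⟨z.1, z.2.1, N.nonroot_ne_lastV z.2.1 z.2.2⟩ -
      if h : N.root z.1 ≠ N.lastV then F a ⟨N.root z.1, N.root_mem z.2.1, h⟩ else 0 := by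
  simp only [Matrix.mul_apply, mul_comm (F a _)]
  rw [sum_reducedIncidence_mul, extendZero_sub_extendZero_root _ _ z.2.1 z.2.2]

theorem restrictNonRoot_stepRow_stepCol (F : Matrix N.Bdry' N.Bdry' ℝ) :
    N.restrictNonRoot (N.stepRow (N.stepCol F)) =
      N.reducedIncidenceᵀ * F * N.reducedIncidence := by
  ext y z
  rw [Matrix.mul_assoc, Matrix.mul_apply]
  simp only [transpose_apply]
  rw [sum_reducedIncidence_mul (x := fun w => (F * N.reducedIncidence) w z),
    extendZero_sub_extendZero_root _ _ y.2.1 y.2.2]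
  simp only [mul_reducedIncidence_apply, restrictNonRoot, stepRow, stepCol, ne_eq, y.2.2, z.2.2,
    not_false_eq_true, true_and]
  by_cases hy : N.root y.1 = N.lastV <;> by_cases hz : N.root z.1 = N.lastV <;> simp [hy, hz]

variable {N}

theorem exists_solution {C : Matrix N.Bdry N.Bdry ℝ} (hC : N.IsElecResponse C)
    (J : N.NonRoot → ℝ) :
    ∃ U : Fin N.n → ℝ,
      N.Axioms (fun k => U k - U (N.root k)) U (fun k l => N.c k l * (U k - U l)) ∧
      (fun y : N.NonRoot => U y.1 - U (N.root y.1)) =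
        (N.reducedIncidenceᵀ * (N.Ctilde C)⁻¹ * N.reducedIncidence) *ᵥ J ∧
      ∀ y : N.NonRoot, N.current U y.1 = J y := by
  have hdet := (N.Ctilde C).isUnit_iff_isUnit_det.mp (isUnit_Ctilde hC)
  obtain ⟨U, hUM, hUint, hUcur⟩ :=
    exists_potential hC ((N.Ctilde C)⁻¹ *ᵥ (N.reducedIncidence *ᵥ J))
  have hcur : ∀ w : N.Bdry', N.current U w.1 = (N.reducedIncidence *ᵥ J) w := fun w => by
    rw [hUcur, mulVec_mulVec, mul_nonsing_inv _ hdet, one_mulVec]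
  refine ⟨U, ⟨fun _ _ => rfl, hUint, fun i hi => ?_, fun _ _ _ => rfl⟩, ?_, fun y => ?_⟩
  · calc ∑ k ∈ N.A i, ∑ l, N.c k l * (U k - U l)
        = ∑ k ∈ N.A i, ∑ z, N.portIncidence k z * J z := Finset.sum_congr rfl fun k hk =>
          hcur ⟨k, N.port_subset_M i hk, N.ne_lastV_of_mem_port hi hk⟩
      _ = ∑ z, (∑ k ∈ N.A i, N.portIncidence k z) * J z := by
          rw [Finset.sum_comm]; simp only [Finset.sum_mul]
      _ = 0 := by simp [sum_portIncidence_port]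
  · ext y
    rw [hUM _ y.2.1, hUM _ (N.root_mem y.2.1), ← sum_reducedIncidence_mul, Matrix.mul_assoc,
      ← mulVec_mulVec, ← mulVec_mulVec, mulVec_transpose]
    simp only [vecMul, dotProduct, mul_comm]
  · rw [hcur ⟨y.1, y.2.1, N.nonroot_ne_lastV y.2.1 y.2.2⟩, reducedIncidence_mulVec_apply]

theorem response_mul_eq_one {L : Matrix N.NonRoot N.NonRoot ℝ} (hL : N.IsResponse L)
    {C : Matrix N.Bdry N.Bdry ℝ} (hC : N.IsElecResponse C) :
    L * (N.reducedIncidenceᵀ * (N.Ctilde C)⁻¹ * N.reducedIncidence) = 1 := by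
  refine Matrix.ext_iff_mulVec.mpr fun J => ?_
  obtain ⟨U, hAx, hΔ, hJ⟩ := exists_solution hC J
  ext x
  rw [one_mulVec, ← mulVec_mulVec, ← hΔ, ← hJ x, current]
  exact (hL _ U _ hAx x).symm

end Network

theorem response_from_unified_response_general (N : Network)
    (L : Matrix N.NonRoot N.NonRoot ℝ) (hL : N.IsResponse L)
    (C : Matrix N.Bdry N.Bdry ℝ) (hC : N.IsElecResponse C) :
    IsUnit (N.Ctilde C) ∧
    IsUnit (N.restrictNonRoot (N.stepRow (N.stepCol (N.Ctilde C)⁻¹))) ∧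
    L = (N.restrictNonRoot (N.stepRow (N.stepCol (N.Ctilde C)⁻¹)))⁻¹ := by
  have hLH : L * N.restrictNonRoot (N.stepRow (N.stepCol (N.Ctilde C)⁻¹)) = 1 := by
    rw [N.restrictNonRoot_stepRow_stepCol]
    exact Network.response_mul_eq_one hL hC
  exact ⟨Network.isUnit_Ctilde hC, IsUnit.of_mul_eq_one_right _ hLH,
    (Matrix.inv_eq_left_inv hLH).symm⟩

/-- **The C2L algorithm** (Theorem 5.2): the response matrix `L` of a superport network is
obtained from the response matrix `C` of the electrical network obtained by unifying all
the superports by the following steps: remove the last row and column and invert; subtract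
the column `root k` from the column `k` for each non-root `k` with `root k ≠` the last
vertex; likewise for rows; delete the rows and columns of all roots distinct from the last
vertex; invert. -/
theorem response_from_unified_response (N : Network) (hmp : N.p < N.m)
    (L : Matrix N.NonRoot N.NonRoot ℝ) (hL : N.IsResponse L)
    (C : Matrix N.Bdry N.Bdry ℝ) (hC : N.IsElecResponse C) :
    IsUnit (N.Ctilde C) ∧
    IsUnit (N.restrictNonRoot (N.stepRow (N.stepCol (N.Ctilde C)⁻¹))) ∧
    L = (N.restrictNonRoot (N.stepRow (N.stepCol (N.Ctilde C)⁻¹)))⁻¹ :=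
  response_from_unified_response_general N L hL C hC

end Superport
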